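/- Let d = 2. Then R_sharp yields an ideal MIP formulation of S_max: (i) the projection onto the (x, y)-coordinates of {(x,y,z) ∈ R_sharp : z ∈ {0,1}^2} equals S_max; and (ii) every extreme point (x, y, z) of R_sharp satisfies z ∈ {0,1}^2. -/

import Mathlib

open scoped Pointwise

noncomputable section

/-- Dot product on `Fin n → ℝ`. -/
def dotp {n : ℕ} (w x : Fin n → ℝ) : ℝ := ∑ i, w i * x i

/-- The affine function `f^k(x) = w^k ⬝ x + b^k`. -/
def affK {η d : ℕ} (w : Fin d → Fin η → ℝ) (b : Fin d → ℝ) (k : Fin d) (x : Fin η → ℝ) : ℝ :=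
  dotp (w k) x + b k

/-- The set `R_sharp`. -/
def RsharpSet {η d : ℕ} (D : Set (Fin η → ℝ)) (w : Fin d → Fin η → ℝ) (b : Fin d → ℝ) :
    Set ((Fin η → ℝ) × ℝ × (Fin d → ℝ)) :=
  {p | p.1 ∈ D ∧ p.2.2 ∈ stdSimplex ℝ (Fin d)
    ∧ (∀ k, affK w b k p.1 ≤ p.2.1)
    ∧ ∃ xt : Fin d → Fin η → ℝ, (∀ k, xt k ∈ p.2.2 k • D) ∧ p.1 = ∑ k, xt k
        ∧ p.2.1 ≤ ∑ k, (dotp (w k) (xt k) + b k * p.2.2 k)}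

/-!
A point of `R_sharp` is `z = (t, 1 - t)`, `x = t u₀ + (1 - t) u₁` with `u₀, u₁ ∈ D`, and
`max_k f^k(x) ≤ y ≤ t f^0(u₀) + (1 - t) f^1(u₁)`; for binary `t` this pins `y = max_k f^k(x)`.
For fractional `t`, keep `u₀, u₁` and move along `t + s`, `x + s (u₀ - u₁)`, `y + s μ`. Every
constraint is affine in `s`, so if `μ` is the slope of each constraint that is tight at `s = 0`,
all of them hold for small `|s|` and the point is the midpoint of two others. Such a `μ` exists
unless both lower bounds are tight, and then `u₀ = u₁ = x` works instead.
-/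

open Set Filter Topology

lemma dotp_eq_dotProduct {n : ℕ} (w x : Fin n → ℝ) : dotp w x = w ⬝ᵥ x := rfl

lemma convex_setOf_forall_dotp_le {n m : ℕ} (A : Fin m → Fin n → ℝ) (c : Fin m → ℝ) :
    Convex ℝ {x | ∀ i, dotp (A i) x ≤ c i} := by
  simp only [ofPred_forall]
  exact convex_iInter fun i => convex_halfSpace_le
    ⟨fun x y => dotProduct_add (A i) x y, fun a x => dotProduct_smul a (A i) x⟩ (c i)

lemma dotp_smul {n : ℕ} (a : ℝ) (w x : Fin n → ℝ) : dotp w (a • x) = a * dotp w x :=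
  dotProduct_smul a w x

lemma affK_smul_add_smul {η d : ℕ} (w : Fin d → Fin η → ℝ) (b : Fin d → ℝ) (k : Fin d)
    {a c : ℝ} (hac : a + c = 1) (u v : Fin η → ℝ) :
    affK w b k (a • u + c • v) = a * affK w b k u + c * affK w b k v := by
  simp only [affK, dotp_eq_dotProduct, dotProduct_add, dotProduct_smul, smul_eq_mul]
  linear_combination b k * hac.symm

lemma notMem_extremePoints_of_eventually_add_smul_mem {E : Type*} [AddCommGroup E]
    [Module ℝ E] {S : Set E} {p v : E} (hv : v ≠ 0)
    (h : ∀ᶠ s in 𝓝 (0 : ℝ), p + s • v ∈ S) : p ∉ S.extremePoints ℝ := by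
  obtain ⟨δ, hδ, hball⟩ := Metric.eventually_nhds_iff.mp h
  have hε : 0 < δ / 2 := half_pos hδ
  have hmem : ∀ s : ℝ, |s| = δ / 2 → p + s • v ∈ S := fun s hs =>
    hball (by rw [Real.dist_0_eq_abs, hs]; linarith)
  intro hp
  have hseg : p ∈ openSegment ℝ (p + (-(δ / 2)) • v) (p + (δ / 2) • v) :=
    ⟨1 / 2, 1 / 2, by norm_num, by norm_num, by norm_num, by module⟩
  have := hp.2 (hmem _ (by rw [abs_neg, abs_of_pos hε])) (hmem _ (abs_of_pos hε)) hseg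
  simp [hε.ne', hv] at this

lemma eventually_add_mul_le {α β a c : ℝ} (hle : α ≤ β) (hslope : α = β → a = c) :
    ∀ᶠ s in 𝓝 (0 : ℝ), α + s * a ≤ β + s * c := by
  rcases hle.lt_or_eq with hlt | heq
  · exact (ContinuousAt.eventually_lt (by fun_prop) (by fun_prop) (by simpa using hlt)).mono
      fun _ h => h.le
  · exact Eventually.of_forall fun s => by rw [heq, hslope heq]

section TwoAffinePieces

variable {η : ℕ} {w : Fin 2 → Fin η → ℝ} {b : Fin 2 → ℝ} {D : Set (Fin η → ℝ)}

lemma mem_RsharpSet_two_iff (hD : Convex ℝ D) {x : Fin η → ℝ} {y : ℝ} {z : Fin 2 → ℝ} :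
    (x, y, z) ∈ RsharpSet D w b ↔ ∃ t ∈ Icc (0 : ℝ) 1, ∃ u₀ ∈ D, ∃ u₁ ∈ D,
      z = ![t, 1 - t] ∧ x = t • u₀ + (1 - t) • u₁ ∧ (∀ k, affK w b k x ≤ y) ∧
      y ≤ t * affK w b 0 u₀ + (1 - t) * affK w b 1 u₁ := by
  constructor
  · rintro ⟨-, ⟨hz, hzsum⟩, hlow, xt, hxt, hx, hup⟩
    dsimp only at hz hzsum hlow hxt hx hup
    obtain ⟨u₀, hu₀, hxt₀⟩ := mem_smul_set.mp (hxt 0)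
    obtain ⟨u₁, hu₁, hxt₁⟩ := mem_smul_set.mp (hxt 1)
    have hz₁ : z 1 = 1 - z 0 := by rw [Fin.sum_univ_two] at hzsum; linarith
    refine ⟨z 0, ⟨hz 0, by linarith [hz 1]⟩, u₀, hu₀, u₁, hu₁, ?_, ?_, hlow, ?_⟩
    · ext k; fin_cases k <;> simp [hz₁]
    · rw [hx, Fin.sum_univ_two, ← hxt₀, ← hxt₁, hz₁]
    · simpa only [Fin.sum_univ_two, ← hxt₀, ← hxt₁, dotp_smul, hz₁, affK, mul_add,
        mul_comm (b _)] using hup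
  · rintro ⟨t, ⟨ht₀, ht₁⟩, u₀, hu₀, u₁, hu₁, rfl, rfl, hlow, hup⟩
    refine ⟨hD hu₀ hu₁ ht₀ (by linarith) (by ring), ⟨?_, ?_⟩, hlow, ![t • u₀, (1 - t) • u₁],
      ?_, by simp, ?_⟩
    · intro k; fin_cases k <;> simp [ht₀, ht₁]
    · simp
    · intro k; fin_cases k
      exacts [smul_mem_smul_set hu₀, smul_mem_smul_set hu₁]
    · simpa [Fin.sum_univ_two, dotp_smul, affK, mul_add, mul_comm (b _)] using hup

lemma affK_add_smul_sub (k : Fin 2) (x u v : Fin η → ℝ) (s : ℝ) :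
    affK w b k (x + s • (u - v)) = affK w b k x + s * (affK w b k u - affK w b k v) := by
  simp only [affK, dotp_eq_dotProduct, dotProduct_add, dotProduct_smul, dotProduct_sub,
    smul_eq_mul]
  ring

lemma notMem_extremePoints_RsharpSet_of_eventually (hD : Convex ℝ D) {t : ℝ}
    (ht : t ∈ Ioo (0 : ℝ) 1) {u₀ u₁ x : Fin η → ℝ} (hu₀ : u₀ ∈ D) (hu₁ : u₁ ∈ D)
    (hx : x = t • u₀ + (1 - t) • u₁) {y μ : ℝ}
    (hlow : ∀ k, ∀ᶠ s in 𝓝 (0 : ℝ),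
      affK w b k x + s * (affK w b k u₀ - affK w b k u₁) ≤ y + s * μ)
    (hup : ∀ᶠ s in 𝓝 (0 : ℝ), y + s * μ ≤ t * affK w b 0 u₀ + (1 - t) * affK w b 1 u₁
      + s * (affK w b 0 u₀ - affK w b 1 u₁)) :
    (x, y, ![t, 1 - t]) ∉ (RsharpSet D w b).extremePoints ℝ := by
  refine notMem_extremePoints_of_eventually_add_smul_mem (v := (u₀ - u₁, μ, ![1, -1]))
    (by simp) ?_
  have hIoo : ∀ᶠ s in 𝓝 (0 : ℝ), s ∈ Ioo (-t) (1 - t) :=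
    Ioo_mem_nhds (by linarith [ht.1]) (by linarith [ht.2])
  filter_upwards [hlow 0, hlow 1, hup, hIoo] with s h₀ h₁ hs hs'
  rw [Prod.smul_mk, Prod.smul_mk, Prod.mk_add_mk, Prod.mk_add_mk, mem_RsharpSet_two_iff hD]
  refine ⟨t + s, ⟨by linarith [hs'.1], by linarith [hs'.2]⟩, u₀, hu₀, u₁, hu₁, ?_, ?_, ?_, ?_⟩
  · ext k; fin_cases k <;> simp; ring
  · rw [hx]; module
  · intro k
    rw [affK_add_smul_sub, smul_eq_mul]
    fin_cases k
    exacts [h₀, h₁]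
  · rw [smul_eq_mul]; linear_combination hs

lemma notMem_extremePoints_RsharpSet_of_mem_Ioo (hD : Convex ℝ D) {t : ℝ}
    (ht : t ∈ Ioo (0 : ℝ) 1) {u₀ u₁ x : Fin η → ℝ} (hu₀ : u₀ ∈ D) (hu₁ : u₁ ∈ D)
    (hx : x = t • u₀ + (1 - t) • u₁) {y : ℝ} (hlow : ∀ k, affK w b k x ≤ y)
    (hup : y ≤ t * affK w b 0 u₀ + (1 - t) * affK w b 1 u₁) :
    (x, y, ![t, 1 - t]) ∉ (RsharpSet D w b).extremePoints ℝ := by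
  by_cases hkink : affK w b 0 x = y ∧ affK w b 1 x = y
  · have hxD : x ∈ D := hx ▸ hD hu₀ hu₁ ht.1.le (by linarith [ht.2]) (by ring)
    refine notMem_extremePoints_RsharpSet_of_eventually hD ht hxD hxD (μ := 0) (by module)
      (fun k => eventually_add_mul_le (hlow k) fun _ => by ring)
      (eventually_add_mul_le ?_ fun _ => ?_)
    · rw [hkink.1, hkink.2]; linarith
    · rw [hkink.1, hkink.2, sub_self]
  have hA₀ : affK w b 0 x = t * affK w b 0 u₀ + (1 - t) * affK w b 0 u₁ := by
    rw [hx]; exact affK_smul_add_smul w b 0 (by ring) u₀ u₁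
  have hA₁ : affK w b 1 x = t * affK w b 1 u₀ + (1 - t) * affK w b 1 u₁ := by
    rw [hx]; exact affK_smul_add_smul w b 1 (by ring) u₀ u₁
  obtain ⟨μ, hμ₀, hμ₁, hμU⟩ : ∃ μ,
      (affK w b 0 x = y → affK w b 0 u₀ - affK w b 0 u₁ = μ) ∧
      (affK w b 1 x = y → affK w b 1 u₀ - affK w b 1 u₁ = μ) ∧
      (y = t * affK w b 0 u₀ + (1 - t) * affK w b 1 u₁ → μ = affK w b 0 u₀ - affK w b 1 u₁) := by
    -- The upper bound exceeds the lower bound `k` by `(1 - t) (f¹ u₁ - f⁰ u₁)`, resp.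
    -- `t (f⁰ u₀ - f¹ u₀)`, and their slopes differ by that factor without its weight:
    -- so if both are tight, their slopes agree.
    by_cases hU : y = t * affK w b 0 u₀ + (1 - t) * affK w b 1 u₁
    · refine ⟨affK w b 0 u₀ - affK w b 1 u₁, fun h => ?_, fun h => ?_, fun _ => rfl⟩
      · have : (1 - t) * affK w b 0 u₁ = (1 - t) * affK w b 1 u₁ := by linarith
        rw [mul_left_cancel₀ (sub_pos.mpr ht.2).ne' this]
      · have : t * affK w b 1 u₀ = t * affK w b 0 u₀ := by linarith
        rw [mul_left_cancel₀ ht.1.ne' this]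
    · by_cases h₀ : affK w b 0 x = y
      · exact ⟨_, fun _ => rfl, fun h₁ => absurd ⟨h₀, h₁⟩ hkink, fun h => absurd h hU⟩
      · exact ⟨_, fun h => absurd h h₀, fun _ => rfl, fun h => absurd h hU⟩
  refine notMem_extremePoints_RsharpSet_of_eventually hD ht hu₀ hu₁ hx (μ := μ)
    (fun k => eventually_add_mul_le (hlow k) ?_) (eventually_add_mul_le hup hμU)
  fin_cases k
  exacts [hμ₀, hμ₁]

lemma binary_of_mem_extremePoints_RsharpSet (hD : Convex ℝ D)
    {p : (Fin η → ℝ) × ℝ × (Fin 2 → ℝ)} (hp : p ∈ (RsharpSet D w b).extremePoints ℝ)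
    (k : Fin 2) : p.2.2 k = 0 ∨ p.2.2 k = 1 := by
  obtain ⟨x, y, z⟩ := p
  obtain ⟨t, ht, u₀, hu₀, u₁, hu₁, rfl, hx, hlow, hup⟩ := (mem_RsharpSet_two_iff hD).mp hp.1
  have ht01 : t = 0 ∨ t = 1 := by
    by_contra h
    obtain ⟨h₀, h₁⟩ := not_or.mp h
    exact notMem_extremePoints_RsharpSet_of_mem_Ioo hD
      ⟨ht.1.lt_of_ne' h₀, ht.2.lt_of_ne h₁⟩ hu₀ hu₁ hx hlow hup hp
  fin_cases k <;> rcases ht01 with rfl | rfl <;> simp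

lemma image_binary_RsharpSet_eq (hD : Convex ℝ D) :
    (fun p : (Fin η → ℝ) × ℝ × (Fin 2 → ℝ) => (p.1, p.2.1)) ''
        {p ∈ RsharpSet D w b | ∀ k, p.2.2 k = 0 ∨ p.2.2 k = 1}
      = {q | q.1 ∈ D ∧ q.2 = max (affK w b 0 q.1) (affK w b 1 q.1)} := by
  ext ⟨x, y⟩
  constructor
  · rintro ⟨⟨x', y', z⟩, ⟨hp, hbin⟩, hxy⟩
    obtain ⟨rfl, rfl⟩ := Prod.mk.inj hxy
    obtain ⟨t, -, u₀, hu₀, u₁, hu₁, rfl, rfl, hlow, hup⟩ := (mem_RsharpSet_two_iff hD).mp hp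
    rcases hbin 0 with h | h <;> obtain rfl : t = _ := h <;> norm_num at hup hlow ⊢
    exacts [⟨hu₁, (hup.trans (le_max_right _ _)).antisymm (max_le hlow.1 hlow.2)⟩,
      ⟨hu₀, (hup.trans (le_max_left _ _)).antisymm (max_le hlow.1 hlow.2)⟩]
  · rintro ⟨hx, hy⟩
    dsimp only at hx hy
    subst hy
    have hlow : ∀ k, affK w b k x ≤ max (affK w b 0 x) (affK w b 1 x) := by
      intro k; fin_cases k
      exacts [le_max_left _ _, le_max_right _ _]
    obtain ⟨t, ht, hvertex⟩ : ∃ t : ℝ, (t = 0 ∨ t = 1) ∧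
        max (affK w b 0 x) (affK w b 1 x) = t * affK w b 0 x + (1 - t) * affK w b 1 x := by
      rcases le_total (affK w b 1 x) (affK w b 0 x) with h | h
      exacts [⟨1, Or.inr rfl, by simp [h]⟩, ⟨0, Or.inl rfl, by simp [h]⟩]
    refine ⟨(x, _, ![t, 1 - t]), ⟨(mem_RsharpSet_two_iff hD).mpr
      ⟨t, ?_, x, hx, x, hx, rfl, by module, hlow, hvertex.le⟩, ?_⟩, rfl⟩
    · rcases ht with rfl | rfl <;> simp
    · intro k; fin_cases k <;> rcases ht with rfl | rfl <;> simp

end TwoAffinePieces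

theorem stmt7_general {η : ℕ}
    (w : Fin 2 → Fin η → ℝ) (b : Fin 2 → ℝ)
    (D : Set (Fin η → ℝ))
    (hDpoly : ∃ (m : ℕ) (A : Fin m → Fin η → ℝ) (c : Fin m → ℝ),
      D = {x | ∀ i, dotp (A i) x ≤ c i}) :
    -- (i) validity
    ((fun p : (Fin η → ℝ) × ℝ × (Fin 2 → ℝ) => (p.1, p.2.1)) ''
        {p ∈ RsharpSet D w b | ∀ k, p.2.2 k = 0 ∨ p.2.2 k = 1}
      = {q : (Fin η → ℝ) × ℝ | q.1 ∈ D
          ∧ q.2 = max (dotp (w 0) q.1 + b 0) (dotp (w 1) q.1 + b 1)})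
    -- (ii) every extreme point has binary z
    ∧ (∀ p ∈ Set.extremePoints ℝ (RsharpSet D w b),
        ∀ k, p.2.2 k = 0 ∨ p.2.2 k = 1) := by
  obtain ⟨m, A, c, rfl⟩ := hDpoly
  have hD := convex_setOf_forall_dotp_le A c
  exact ⟨image_binary_RsharpSet_eq hD, fun p hp => binary_of_mem_extremePoints_RsharpSet hD hp⟩

theorem stmt7 {η : ℕ} (hη : 1 ≤ η)
    (w : Fin 2 → Fin η → ℝ) (b : Fin 2 → ℝ)
    (D : Set (Fin η → ℝ))
    (hDpoly : ∃ (m : ℕ) (A : Fin m → Fin η → ℝ) (c : Fin m → ℝ),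
      D = {x | ∀ i, dotp (A i) x ≤ c i})
    (hDne : D.Nonempty) (hDbd : Bornology.IsBounded D)
    (hirr : ∀ k, ∃ x ∈ D, ∀ ℓ, ℓ ≠ k → affK w b ℓ x < affK w b k x) :
    -- (i) validity
    ((fun p : (Fin η → ℝ) × ℝ × (Fin 2 → ℝ) => (p.1, p.2.1)) ''
        {p ∈ RsharpSet D w b | ∀ k, p.2.2 k = 0 ∨ p.2.2 k = 1}
      = {q : (Fin η → ℝ) × ℝ | q.1 ∈ D
          ∧ q.2 = max (dotp (w 0) q.1 + b 0) (dotp (w 1) q.1 + b 1)})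
    -- (ii) every extreme point has binary z
    ∧ (∀ p ∈ Set.extremePoints ℝ (RsharpSet D w b),
        ∀ k, p.2.2 k = 0 ∨ p.2.2 k = 1) :=
  stmt7_general w b D hDpoly
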